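/- Let X be a smooth projective variety with ample line bundle L, and let Z_s = θ_s + i·rk with θ_s(E) = c₁(E)·c₁(L)^{n-1} − s·rk(E). A coherent sheaf E belongs to the torsion-free class F_{Z_s} of the associated torsion pair if and only if E is torsion free and μ_max(E) ≤ s, where μ is the slope μ(E) = c₁(E)·c₁(L)^{n-1}/rk(E) and μ_max denotes the maximal slope in the Harder–Narasimhan filtration. -/

import Mathlib

/-!
STATEMENT 11: Let `X` be a smooth projective variety with ample line bundle `L`, and
`Z_s = θ_s + i·rk` with `θ_s(E) = c₁(E)·c₁(L)^{n-1} − s·rk(E)`. A coherent sheaf `E`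
belongs to the torsion-free class `F_{Z_s}` of the associated torsion pair if and only
if `E` is torsion free and `μ_max(E) ≤ s`.

We model `coh(X)` as an abelian category `C` with additive rank `rk : C → ℕ` and
ample degree `c1L : C → ℤ` (so `μ(E) = c1L E / rk E` and `θ_s = c1L − s·rk`).
`E` is torsion free iff every subobject of rank zero is zero, and `μ_max(E) ≤ s` iff
every nonzero subobject `E'` has slope `≤ s`, i.e. `c1L E' ≤ s·rk E'` (this is the
standard characterization of the maximal Harder–Narasimhan slope). The torsion class
`T_{Z_s}` consists of those `E` all of whose quotients `E''`, with maximal rank-zero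
(torsion) subobject `E''₀`, satisfy `E'' = E''₀` or `θ_s(E''/E''₀) > 0`; `F_{Z_s}` is
its right orthogonal.
-/

open CategoryTheory CategoryTheory.Limits

universe v u

variable {C : Type u} [Category.{v} C] [Abelian C]

/-- `θ_s(E) = c₁(E)·c₁(L)^{n-1} − s·rk(E)`. -/
noncomputable def thetaS (rk : C → ℕ) (c1L : C → ℤ) (s : ℝ) (E : C) : ℝ :=
  (c1L E : ℝ) - s * (rk E : ℝ)

/-- `i : E₀ ⟶ E` exhibits `E₀` as the maximal rank-zero (torsion) subobject of `E`. -/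
def IsMaxTorsionSub (rk : C → ℕ) {E : C} (E₀ : C) (i : E₀ ⟶ E) : Prop :=
  Mono i ∧ rk E₀ = 0 ∧
    ∀ (y : C) (j : y ⟶ E), Mono j → rk y = 0 → ∃ k : y ⟶ E₀, k ≫ i = j

/-- The torsion class `T_{Z_s}` of the weak central charge `Z_s = θ_s + i·rk`. -/
def TZs (rk : C → ℕ) (c1L : C → ℤ) (s : ℝ) (E : C) : Prop :=
  ∀ (E'' : C) (p : E ⟶ E''), Epi p →
    ∀ (E₀ : C) (i : E₀ ⟶ E''), IsMaxTorsionSub rk E₀ i →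
      (IsIso i ∨ 0 < thetaS rk c1L s (cokernel i))

/-- The torsion-free class `F_{Z_s}`: the right orthogonal of `T_{Z_s}`. -/
def FZs (rk : C → ℕ) (c1L : C → ℤ) (s : ℝ) (E : C) : Prop :=
  ∀ (t : C), TZs rk c1L s t → ∀ f : t ⟶ E, f = 0

/-- `E` is torsion free: every subobject of rank zero is zero. -/
def TorsionFree (rk : C → ℕ) (E : C) : Prop :=
  ∀ (x : C) (i : x ⟶ E), Mono i → rk x = 0 → IsZero x

/-!
Rank-zero objects always lie in `T_{Z_s}`, so they admit no nonzero map to `E ∈ F_{Z_s}`. A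
subobject `E' ⊆ E` outside `T_{Z_s}` has a quotient `E' ↠ Q` of positive rank with `θ_s(Q) ≤ 0`,
namely the torsion-free part of a quotient violating the defining condition; since `θ_s` is additive,
`θ_s(E') ≤ 0` follows by induction on the rank, the kernel being a subobject of smaller rank. A
subobject in `T_{Z_s}` is zero. Conversely, for `t ∈ T_{Z_s}` and `f : t ⟶ E` with `E` torsion
free, the image of `f` is a torsion-free quotient of `t`, whose maximal torsion subobject is `0`;
so it is zero or has `θ_s > 0`, and the slope bound excludes the latter.
-/

def IsAdditiveOnShortExact {M : Type*} [Add M] (f : C → M) : Prop :=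
  ∀ S : ShortComplex C, S.ShortExact → f S.X₂ = f S.X₁ + f S.X₃

namespace IsAdditiveOnShortExact

variable {M : Type*} [AddCancelCommMonoid M] {f : C → M} (hf : IsAdditiveOnShortExact f)
include hf

lemma eq_add_cokernel {A B : C} (i : A ⟶ B) [Mono i] : f B = f A + f (cokernel i) :=
  hf _ ⟨ShortComplex.exact_cokernel i⟩

lemma eq_kernel_add {B D : C} (p : B ⟶ D) [Epi p] : f B = f (kernel p) + f D :=
  hf _ ⟨ShortComplex.exact_kernel p⟩

lemma eq_zero_of_isZero {A : C} (hA : IsZero A) : f A = 0 := by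
  have hS : (ShortComplex.mk (𝟙 A) (𝟙 A) (hA.eq_of_src _ _)).ShortExact :=
    ⟨ShortComplex.exact_of_isZero_X₂ _ hA⟩
  simpa using hf _ hS

end IsAdditiveOnShortExact

section TorsionPair

open ZeroObject

variable {rk : C → ℕ} {c1L : C → ℤ} {s : ℝ}

lemma isAdditiveOnShortExact_thetaS (hrk : IsAdditiveOnShortExact rk)
    (hc1L : IsAdditiveOnShortExact c1L) : IsAdditiveOnShortExact (thetaS rk c1L s) := by
  intro S hS
  simp only [thetaS, hrk S hS, hc1L S hS]
  push_cast
  ring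

lemma IsMaxTorsionSub.isIso_of_rk_eq_zero {E E₀ : C} {i : E₀ ⟶ E} (hi : IsMaxTorsionSub rk E₀ i)
    (hE : rk E = 0) : IsIso i := by
  obtain ⟨hmono, -, hmax⟩ := hi
  obtain ⟨k, hk⟩ := hmax E (𝟙 E) inferInstance hE
  have : IsSplitEpi i := ⟨⟨k, hk⟩⟩
  exact isIso_of_mono_of_epi i

lemma isMaxTorsionSub_zero_of_torsionFree (hrk : IsAdditiveOnShortExact rk) {E : C}
    (hE : TorsionFree rk E) : IsMaxTorsionSub rk (0 : C) (0 : 0 ⟶ E) := by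
  refine ⟨mono_of_source_iso_zero _ (Iso.refl _), hrk.eq_zero_of_isZero (isZero_zero C), ?_⟩
  intro y j hj hy
  exact ⟨0, ((hE y j hj hy).eq_of_src _ _).symm⟩

lemma TZs.of_rk_eq_zero (hrk : IsAdditiveOnShortExact rk) {t : C} (ht : rk t = 0) :
    TZs rk c1L s t := by
  intro E'' p _ E₀ i hi
  have hE'' : rk E'' = 0 := by
    have := hrk.eq_kernel_add p
    omega
  exact Or.inl (hi.isIso_of_rk_eq_zero hE'')

lemma TZs.isZero_or_thetaS_pos (hrk : IsAdditiveOnShortExact rk)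
    (hc1L : IsAdditiveOnShortExact c1L) {t I : C} (ht : TZs rk c1L s t) (p : t ⟶ I) [Epi p]
    (hI : TorsionFree rk I) : IsZero I ∨ 0 < thetaS rk c1L s I := by
  rcases ht I p inferInstance 0 0 (isMaxTorsionSub_zero_of_torsionFree hrk hI) with hiso | hpos
  · exact Or.inl ((isZero_zero C).of_iso (asIso (0 : 0 ⟶ I)).symm)
  · have hθ := isAdditiveOnShortExact_thetaS (s := s) hrk hc1L
    rw [hθ.eq_add_cokernel (0 : 0 ⟶ I), hθ.eq_zero_of_isZero (isZero_zero C), zero_add]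
    exact Or.inr hpos

lemma exists_epi_of_not_TZs (hrk : IsAdditiveOnShortExact rk) {t : C} (ht : ¬ TZs rk c1L s t) :
    ∃ (Q : C) (g : t ⟶ Q), Epi g ∧ 0 < rk Q ∧ thetaS rk c1L s Q ≤ 0 := by
  simp only [TZs, not_forall, not_or, not_lt] at ht
  obtain ⟨E'', p, hp, E₀, i, hi, hiso, hθ⟩ := ht
  have : Mono i := hi.1
  refine ⟨cokernel i, p ≫ cokernel.π i, epi_comp _ _, Nat.pos_of_ne_zero fun hQ => ?_, hθ⟩
  have hE'' : rk E'' = 0 := by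
    have := hrk.eq_add_cokernel i
    have := hi.2.1
    omega
  exact hiso (hi.isIso_of_rk_eq_zero hE'')

lemma FZs.thetaS_nonpos (hrk : IsAdditiveOnShortExact rk) (hc1L : IsAdditiveOnShortExact c1L)
    {E : C} (hE : FZs rk c1L s E) (E' : C) (i : E' ⟶ E) [Mono i] : thetaS rk c1L s E' ≤ 0 := by
  have hθ := isAdditiveOnShortExact_thetaS (s := s) hrk hc1L
  induction hn : rk E' using Nat.strong_induction_on generalizing E' with
  | _ n ih =>
    by_cases ht : TZs rk c1L s E'
    · have hz : IsZero E' := IsZero.of_mono_eq_zero i (hE E' ht i)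
      exact (hθ.eq_zero_of_isZero hz).le
    · obtain ⟨Q, g, hg, hQ, hθQ⟩ := exists_epi_of_not_TZs hrk ht
      have hker : thetaS rk c1L s (kernel g) ≤ 0 := by
        refine ih _ ?_ (kernel g) (kernel.ι g ≫ i) rfl
        have := hrk.eq_kernel_add g
        omega
      rw [hθ.eq_kernel_add g]
      linarith

lemma FZs.torsionFree (hrk : IsAdditiveOnShortExact rk) {E : C} (hE : FZs rk c1L s E) :
    TorsionFree rk E := fun x i _ hx =>
  IsZero.of_mono_eq_zero i (hE x (TZs.of_rk_eq_zero hrk hx) i)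

omit [Abelian C] in
lemma TorsionFree.of_mono {E I : C} (hE : TorsionFree rk E) (j : I ⟶ E) [Mono j] :
    TorsionFree rk I := fun x i _ hx => hE x (i ≫ j) inferInstance hx

end TorsionPair

theorem mem_FZs_iff_torsionFree_and_muMax_le_general
    (rk : C → ℕ) (c1L : C → ℤ)
    (hrk : ∀ S : ShortComplex C, S.ShortExact → rk S.X₂ = rk S.X₁ + rk S.X₃)
    (hc1L : ∀ S : ShortComplex C, S.ShortExact → c1L S.X₂ = c1L S.X₁ + c1L S.X₃)
    (s : ℝ) (E : C) :
    FZs rk c1L s E ↔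
      (TorsionFree rk E ∧
        -- `μ_max(E) ≤ s`: every nonzero subobject has slope at most `s`
        ∀ (E' : C) (i : E' ⟶ E), Mono i → ¬ IsZero E' →
          (c1L E' : ℝ) ≤ s * (rk E' : ℝ)) := by
  refine ⟨fun hF => ⟨hF.torsionFree hrk, fun E' i _ _ => ?_⟩, fun ⟨hTF, hslope⟩ t ht f => ?_⟩
  · exact sub_nonpos.mp (hF.thetaS_nonpos hrk hc1L E' i)
  · rw [← Abelian.image.fac f]
    rcases ht.isZero_or_thetaS_pos hrk hc1L (Abelian.factorThruImage f)
      (hTF.of_mono (Abelian.image.ι f)) with hI | hpos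
    · rw [hI.eq_of_src (Abelian.image.ι f) 0, comp_zero]
    · have hI : ¬ IsZero (Abelian.image f) := fun hzero =>
        hpos.ne' ((isAdditiveOnShortExact_thetaS hrk hc1L).eq_zero_of_isZero hzero)
      exact absurd (hslope _ (Abelian.image.ι f) inferInstance hI) (not_le.mpr (sub_pos.mp hpos))

theorem mem_FZs_iff_torsionFree_and_muMax_le
    (rk : C → ℕ) (c1L : C → ℤ)
    (hrk : ∀ S : ShortComplex C, S.ShortExact → rk S.X₂ = rk S.X₁ + rk S.X₃)
    (hc1L : ∀ S : ShortComplex C, S.ShortExact → c1L S.X₂ = c1L S.X₁ + c1L S.X₃)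
    (htorsion : ∀ E : C, rk E = 0 → 0 ≤ c1L E)
    (s : ℝ) (E : C) :
    FZs rk c1L s E ↔
      (TorsionFree rk E ∧
        -- `μ_max(E) ≤ s`: every nonzero subobject has slope at most `s`
        ∀ (E' : C) (i : E' ⟶ E), Mono i → ¬ IsZero E' →
          (c1L E' : ℝ) ≤ s * (rk E' : ℝ)) :=
  mem_FZs_iff_torsionFree_and_muMax_le_general rk c1L hrk hc1L s E
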